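/- arXiv:0806.3318 — 4 statements merged into one kernel-verified Lean document; each statement's English description precedes it below -/
import Mathlib

section
/- Let K be a real symmetric positive definite g×g matrix and β ∈ ℝ^g. Then for every l ∈ ℤ^g and Z ∈ ℝ^g, Θ[β](Z + lK) = -(1/2)lKlᵀ - lZᵀ + Θ[β](Z). -/
/-!
Write `Q(x) = ½ xKxᵀ` and `T_v(x) = Q(x) + x vᵀ` (`tropicalThetaTerm K v x`), so that `Θ[β](Z)`
is `Q(β) + βZᵀ` plus the infimum of `T_{Z+βK}` over `ℤ^g`. For symmetric `K` one has the cocycle identity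
`T_v(x + l) = T_v(x) + x (lK)ᵀ + T_v(l)`, i.e. `T_{v+lK}(x) = T_v(x + l) - T_v(l)`. Translating
`Z` by `lK` therefore reindexes the lattice by `m ↦ m + l` and subtracts the constant `T_v(l)`;
positive definiteness makes every `T_v` bounded below, so the infimum is finite and the constant
comes out of it.
-/

open Finset in
/-- The tropical Riemann theta function with characteristic `β`. -/
noncomputable def ThetaChar {g : ℕ} (K : Matrix (Fin g) (Fin g) ℝ) (β Z : Fin g → ℝ) : ℝ :=
  (1/2) * (∑ i, ∑ j, β i * K i j * β j) + (∑ i, β i * Z i) +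
    sInf {q : ℝ | ∃ m : Fin g → ℤ,
      q = (1/2) * (∑ i, ∑ j, (m i : ℝ) * K i j * (m j : ℝ)) +
          ∑ i, (m i : ℝ) * (Z i + ∑ j, β j * K j i)}

open Matrix

section Bilinear

variable {n R : Type*} [Fintype n]

lemma dotProduct_mulVec_eq_sum [NonUnitalSemiring R] (K : Matrix n n R) (x y : n → R) :
    x ⬝ᵥ K *ᵥ y = ∑ i, ∑ j, x i * K i j * y j := by
  simp [dotProduct, mulVec, Finset.mul_sum, mul_assoc]

variable [CommSemiring R] {K : Matrix n n R}

lemma Matrix.IsSymm.vecMul_eq_mulVec (hK : K.IsSymm) (x : n → R) : x ᵥ* K = K *ᵥ x := by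
  rw [← vecMul_transpose, hK.eq]

lemma Matrix.IsSymm.dotProduct_vecMul_comm (hK : K.IsSymm) (x y : n → R) :
    x ⬝ᵥ y ᵥ* K = y ⬝ᵥ x ᵥ* K := by
  rw [dotProduct_comm, ← dotProduct_mulVec, ← hK.vecMul_eq_mulVec]

end Bilinear

lemma Matrix.PosDef.isSymm {n : Type*} {K : Matrix n n ℝ} (hK : K.PosDef) : K.IsSymm :=
  isHermitian_iff_isSymm.mp hK.isHermitian

section TropicalThetaTerm

variable {n : Type*} [Fintype n] {K : Matrix n n ℝ}

noncomputable def tropicalThetaTerm (K : Matrix n n ℝ) (v x : n → ℝ) : ℝ :=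
  (1 / 2) * (x ⬝ᵥ K *ᵥ x) + x ⬝ᵥ v

lemma tropicalThetaTerm_add (hK : K.IsSymm) (v x l : n → ℝ) :
    tropicalThetaTerm K v (x + l) =
      tropicalThetaTerm K v x + x ⬝ᵥ l ᵥ* K + tropicalThetaTerm K v l := by
  have hcross : l ⬝ᵥ K *ᵥ x = x ⬝ᵥ l ᵥ* K := by
    rw [← hK.vecMul_eq_mulVec, hK.dotProduct_vecMul_comm]
  have hcross' : x ⬝ᵥ K *ᵥ l = x ⬝ᵥ l ᵥ* K := by rw [hK.vecMul_eq_mulVec]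
  simp only [tropicalThetaTerm, mulVec_add, dotProduct_add, add_dotProduct, hcross, hcross']
  ring

lemma tropicalThetaTerm_add_vecMul (hK : K.IsSymm) (v x l : n → ℝ) :
    tropicalThetaTerm K (v + l ᵥ* K) x =
      tropicalThetaTerm K v (x + l) - tropicalThetaTerm K v l := by
  rw [tropicalThetaTerm_add hK, tropicalThetaTerm, tropicalThetaTerm, dotProduct_add]
  ring

lemma bddBelow_range_tropicalThetaTerm (hK : K.PosDef) (v : n → ℝ) :
    BddBelow (Set.range (tropicalThetaTerm K v)) := by
  classical
  obtain ⟨w, rfl⟩ : ∃ w, w ᵥ* K = v := vecMul_surjective_iff_isUnit.mpr hK.isUnit v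
  refine ⟨-tropicalThetaTerm K 0 w, ?_⟩
  rintro _ ⟨x, rfl⟩
  have hnonneg : 0 ≤ tropicalThetaTerm K 0 (x + w) := by
    have := hK.posSemidef.dotProduct_mulVec_nonneg (x + w)
    simp only [star_trivial] at this
    simp only [tropicalThetaTerm, dotProduct_zero, add_zero]
    positivity
  -- completing the square: `T_{wK}(x) = Q(x + w) - Q(w)`
  have hshift := tropicalThetaTerm_add_vecMul hK.isSymm 0 x w
  rw [zero_add] at hshift
  linarith

lemma iInf_tropicalThetaTerm_add_vecMul (hK : K.PosDef) (v : n → ℝ) (l : n → ℤ) :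
    ⨅ m : n → ℤ, tropicalThetaTerm K (v + (fun i => (l i : ℝ)) ᵥ* K) (fun i => (m i : ℝ)) =
      (⨅ m : n → ℤ, tropicalThetaTerm K v (fun i => (m i : ℝ))) -
        tropicalThetaTerm K v (fun i => (l i : ℝ)) := by
  have hbdd : BddBelow (Set.range fun m : n → ℤ => tropicalThetaTerm K v (fun i => (m i : ℝ))) :=
    (bddBelow_range_tropicalThetaTerm hK v).mono <|
      Set.range_comp_subset_range (fun (m : n → ℤ) (i : n) => (m i : ℝ)) (tropicalThetaTerm K v)
  calc ⨅ m : n → ℤ, tropicalThetaTerm K (v + (fun i => (l i : ℝ)) ᵥ* K) (fun i => (m i : ℝ))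
      = ⨅ m : n → ℤ, (tropicalThetaTerm K v (fun i => ((m + l) i : ℝ)) -
          tropicalThetaTerm K v (fun i => (l i : ℝ))) := by
        simp only [tropicalThetaTerm_add_vecMul hK.isSymm, Pi.add_apply, Int.cast_add]
        rfl
    _ = ⨅ m : n → ℤ, (tropicalThetaTerm K v (fun i => (m i : ℝ)) -
          tropicalThetaTerm K v (fun i => (l i : ℝ))) :=
        (Equiv.addRight l).iInf_comp (g := fun m : n → ℤ =>
          tropicalThetaTerm K v (fun i => (m i : ℝ)) - tropicalThetaTerm K v (fun i => (l i : ℝ)))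
    _ = _ := (ciInf_sub hbdd _).symm

end TropicalThetaTerm

lemma thetaChar_eq_iInf {g : ℕ} (K : Matrix (Fin g) (Fin g) ℝ) (β Z : Fin g → ℝ) :
    ThetaChar K β Z = (1 / 2) * (β ⬝ᵥ K *ᵥ β) + β ⬝ᵥ Z +
      ⨅ m : Fin g → ℤ, tropicalThetaTerm K (Z + β ᵥ* K) (fun i => (m i : ℝ)) := by
  have hset : {q : ℝ | ∃ m : Fin g → ℤ,
      q = (1/2) * (∑ i, ∑ j, (m i : ℝ) * K i j * (m j : ℝ)) +
          ∑ i, (m i : ℝ) * (Z i + ∑ j, β j * K j i)} =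
      Set.range fun m : Fin g → ℤ => tropicalThetaTerm K (Z + β ᵥ* K) (fun i => (m i : ℝ)) := by
    ext q
    simp only [Set.mem_ofPred_eq, Set.mem_range, tropicalThetaTerm, dotProduct_mulVec_eq_sum,
      eq_comm (a := q)]
    rfl
  rw [ThetaChar, hset, dotProduct_mulVec_eq_sum]
  rfl

theorem theta_char_quasi_periodic_general {g : ℕ} (K : Matrix (Fin g) (Fin g) ℝ)
    (hpd : K.PosDef) (β Z : Fin g → ℝ) (l : Fin g → ℤ) :
    ThetaChar K β (Z + fun i => ∑ j, (l j : ℝ) * K j i) =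
      -(1/2) * (∑ i, ∑ j, (l i : ℝ) * K i j * (l j : ℝ)) -
        (∑ i, (l i : ℝ) * Z i) + ThetaChar K β Z := by
  set lR : Fin g → ℝ := fun i => (l i : ℝ)
  change ThetaChar K β (Z + lR ᵥ* K) = -(1/2) * (∑ i, ∑ j, lR i * K i j * lR j) - lR ⬝ᵥ Z + _
  rw [thetaChar_eq_iInf, thetaChar_eq_iInf, add_right_comm Z, iInf_tropicalThetaTerm_add_vecMul hpd,
    ← dotProduct_mulVec_eq_sum, tropicalThetaTerm, dotProduct_add, dotProduct_add,
    hpd.isSymm.dotProduct_vecMul_comm β lR]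
  ring

theorem theta_char_quasi_periodic {g : ℕ} (K : Matrix (Fin g) (Fin g) ℝ)
    (hsym : K.IsSymm) (hpd : K.PosDef) (β Z : Fin g → ℝ) (l : Fin g → ℤ) :
    ThetaChar K β (Z + fun i => ∑ j, (l j : ℝ) * K j i) =
      -(1/2) * (∑ i, ∑ j, (l i : ℝ) * K i j * (l j : ℝ)) -
        (∑ i, (l i : ℝ) * Z i) + ThetaChar K β Z :=
  theta_char_quasi_periodic_general K hpd β Z l
end

section
/- Let K be a real symmetric positive definite g×g matrix with K_{ij} ≤ 0 for all i ≠ j. If Z ∈ ℝ^g and l ∈ ℤ^g satisfy -lZᵀ > (1/2)lKlᵀ, then there exists l' ∈ ℤ^g with l' ≥ 0 or l' ≤ 0 (entrywise) such that -l'Zᵀ > (1/2)l'K(l')ᵀ. -/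
/-!
Write `l = l⁺ - l⁻`. The vectors `l⁺, l⁻ ≥ 0` have disjoint supports, so every term of the cross
term `l⁺ K l⁻ᵀ` pairs two different indices and is `≤ 0` because `K` is nonpositive off the
diagonal. Hence the quadratic form of `l` dominates the sum of those of `l⁺` and `-l⁻`, while the
linear term is additive, and one of the two parts must already violate the inequality.
-/

open Matrix

namespace Int

variable {R : Type*} [Ring R] [LinearOrder R] [IsStrictOrderedRing R]

lemma cast_posPart (a : ℤ) : ((a⁺ : ℤ) : R) = (a : R)⁺ := by
  simp [posPart_def]

lemma cast_negPart (a : ℤ) : ((a⁻ : ℤ) : R) = (a : R)⁻ := by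
  simp [negPart_def]

end Int

section

variable {ι R : Type*} [Fintype ι]

lemma sum_sum_mul_mul_eq_dotProduct_mulVec [CommSemiring R] (K : Matrix ι ι R) (x y : ι → R) :
    ∑ i, ∑ j, x i * K i j * y j = x ⬝ᵥ K *ᵥ y := by
  classical
  exact (toBilin'_apply K x y).symm.trans (toBilin'_apply' K x y)

variable [CommRing R] [LinearOrder R] [IsStrictOrderedRing R] {K : Matrix ι ι R}

lemma dotProduct_mulVec_nonpos_of_inf_eq_zero (hoff : ∀ i j, i ≠ j → K i j ≤ 0) {x y : ι → R}
    (hx : 0 ≤ x) (hy : 0 ≤ y) (hxy : x ⊓ y = 0) : x ⬝ᵥ K *ᵥ y ≤ 0 := by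
  rw [← sum_sum_mul_mul_eq_dotProduct_mulVec]
  refine Finset.sum_nonpos fun i _ => Finset.sum_nonpos fun j _ => ?_
  obtain rfl | hij := eq_or_ne i j
  · have hmin : min (x i) (y i) = 0 := congrFun hxy i
    have hdisj : x i * y i = 0 := by
      obtain h | h := min_choice (x i) (y i) <;> rw [hmin] at h <;> simp [← h]
    rw [mul_right_comm, hdisj, zero_mul]
  · exact mul_nonpos_of_nonpos_of_nonneg
      (mul_nonpos_of_nonneg_of_nonpos (hx i) (hoff i j hij)) (hy j)

lemma add_dotProduct_mulVec_le_sub (hoff : ∀ i j, i ≠ j → K i j ≤ 0) {p n : ι → R}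
    (hp : 0 ≤ p) (hn : 0 ≤ n) (hpn : p ⊓ n = 0) :
    p ⬝ᵥ K *ᵥ p + (-n) ⬝ᵥ K *ᵥ (-n) ≤ (p - n) ⬝ᵥ K *ᵥ (p - n) := by
  have hpn' := dotProduct_mulVec_nonpos_of_inf_eq_zero hoff hp hn hpn
  have hnp' := dotProduct_mulVec_nonpos_of_inf_eq_zero hoff hn hp (inf_comm p n ▸ hpn)
  simp only [mulVec_sub, mulVec_neg, sub_dotProduct, dotProduct_sub, neg_dotProduct,
    dotProduct_neg]
  linarith

end

section

variable {ι R : Type*} [Fintype ι] [Field R] [LinearOrder R] [IsStrictOrderedRing R]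

/-- `x` violates the inequality defining the fundamental region `D₀` of the tropical theta
function. -/
def OutsideFundamentalRegion (K : Matrix ι ι R) (Z x : ι → R) : Prop :=
  (1 / 2) * (x ⬝ᵥ K *ᵥ x) < -(x ⬝ᵥ Z)

lemma OutsideFundamentalRegion.left_or_neg_right_of_sub {K : Matrix ι ι R}
    (hoff : ∀ i j, i ≠ j → K i j ≤ 0) {Z p n : ι → R} (hp : 0 ≤ p) (hn : 0 ≤ n)
    (hpn : p ⊓ n = 0) (h : OutsideFundamentalRegion K Z (p - n)) :
    OutsideFundamentalRegion K Z p ∨ OutsideFundamentalRegion K Z (-n) := by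
  have hQ := add_dotProduct_mulVec_le_sub hoff hp hn hpn
  unfold OutsideFundamentalRegion at *
  rw [sub_dotProduct p n Z] at h
  rw [neg_dotProduct n Z]
  by_contra! hle
  linarith [hle.1, hle.2]

end

theorem exists_signed_violator_general {g : ℕ} (K : Matrix (Fin g) (Fin g) ℝ)
    (hoff : ∀ i j : Fin g, i ≠ j → K i j ≤ 0)
    (Z : Fin g → ℝ) (l : Fin g → ℤ)
    (h : -(∑ i, (l i : ℝ) * Z i) >
      (1/2) * ∑ i, ∑ j, (l i : ℝ) * K i j * (l j : ℝ)) :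
    ∃ l' : Fin g → ℤ, ((∀ i, 0 ≤ l' i) ∨ (∀ i, l' i ≤ 0)) ∧
      -(∑ i, (l' i : ℝ) * Z i) >
        (1/2) * ∑ i, ∑ j, (l' i : ℝ) * K i j * (l' j : ℝ) := by
  simp_rw [sum_sum_mul_mul_eq_dotProduct_mulVec, ← dotProduct.eq_1] at h ⊢
  set v : Fin g → ℝ := fun i => l i
  have hv : OutsideFundamentalRegion K Z (v⁺ - v⁻) := by rwa [posPart_sub_negPart]
  obtain hpos | hneg := hv.left_or_neg_right_of_sub hoff (posPart_nonneg v) (negPart_nonneg v)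
    (posPart_inf_negPart_eq_zero v)
  · refine ⟨fun i => (l i)⁺, Or.inl fun i => posPart_nonneg _, ?_⟩
    rwa [show (fun i => (((l i)⁺ : ℤ) : ℝ)) = v⁺ from funext fun i => Int.cast_posPart (l i)]
  · refine ⟨fun i => -(l i)⁻, Or.inr fun i => neg_nonpos.mpr (negPart_nonneg _), ?_⟩
    rwa [show (fun i => ((-(l i)⁻ : ℤ) : ℝ)) = -v⁻ by ext i; simp [v, Int.cast_negPart]]

theorem exists_signed_violator {g : ℕ} (K : Matrix (Fin g) (Fin g) ℝ)
    (hsym : K.IsSymm) (hpd : K.PosDef) (hoff : ∀ i j : Fin g, i ≠ j → K i j ≤ 0)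
    (Z : Fin g → ℝ) (l : Fin g → ℤ)
    (h : -(∑ i, (l i : ℝ) * Z i) >
      (1/2) * ∑ i, ∑ j, (l i : ℝ) * K i j * (l j : ℝ)) :
    ∃ l' : Fin g → ℤ, ((∀ i, 0 ≤ l' i) ∨ (∀ i, l' i ≤ 0)) ∧
      -(∑ i, (l' i : ℝ) * Z i) >
        (1/2) * ∑ i, ∑ j, (l' i : ℝ) * K i j * (l' j : ℝ) :=
  exists_signed_violator_general K hoff Z l h
end

section
/- Let K be the tridiagonal period matrix as above (positive definite, off-diagonal entries nonpositive, row sums positive). Then the fundamental region D_m = {Z ∈ ℝ^g : -lZᵀ ≤ lK(m + (1/2)l)ᵀ for all l ∈ ℤ^g} equals {Z ∈ ℝ^g : -lZᵀ ≤ lK(m + (1/2)l)ᵀ for all l of the form ±(e_j + e_{j+1} + ... + e_k), 1 ≤ j ≤ k ≤ g}. -/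
/-!
With `c = Z + K m`, the point `Z` lies in `D_m` iff `Q(l) = l cᵀ + l K lᵀ / 2` is nonnegative
for every `l ∈ ℤ^g`. A nonzero `l` is peeled by `v = ±𝟙_I`, where `I` is a maximal interval on
which `l` is positive (or negative): `Q(l) = Q(l - v) + Q(v) + (l - v) K vᵀ`, and the cross term
is nonnegative since `K` has nonpositive off-diagonal entries and nonnegative row sums, while by
tridiagonality `K` couples `I` only to its two neighbours, where `l` lacks that sign.
Induction on `‖l‖₁` reduces everything to the interval vectors.
-/

open Finset

/-- `l` is (plus or minus) the indicator vector of an index interval `[j,k]`. -/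
def IsIntervalVec {g : ℕ} (l : Fin g → ℤ) : Prop :=
  ∃ j k : Fin g, j ≤ k ∧
    ((∀ i, l i = if j ≤ i ∧ i ≤ k then 1 else 0) ∨
     (∀ i, l i = if j ≤ i ∧ i ≤ k then -1 else 0))

open Matrix

theorem IsIntervalVec.neg {g : ℕ} {l : Fin g → ℤ} (h : IsIntervalVec l) : IsIntervalVec (-l) := by
  obtain ⟨j, k, hjk, h | h⟩ := h
  · exact ⟨j, k, hjk, .inr fun i => by simp [h i, apply_ite Neg.neg]⟩
  · exact ⟨j, k, hjk, .inl fun i => by simp [h i, apply_ite Neg.neg]⟩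

theorem exists_maximal_interval {g : ℕ} (P : Fin g → Prop) [DecidablePred P] {i₀ : Fin g}
    (h : P i₀) :
    ∃ a b : Fin g, a ≤ b ∧ (∀ i, a ≤ i → i ≤ b → P i) ∧
      (∀ i : Fin g, i.val + 1 = a.val → ¬ P i) ∧ (∀ i : Fin g, b.val + 1 = i.val → ¬ P i) := by
  set intervals := univ.filter fun p : Fin g × Fin g => p.1 ≤ p.2 ∧ ∀ i, p.1 ≤ i → i ≤ p.2 → P i
  have hi₀ : (i₀, i₀) ∈ intervals := by
    simp only [intervals, mem_filter, mem_univ, true_and]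
    exact ⟨le_rfl, fun i h₁ h₂ => le_antisymm h₂ h₁ ▸ h⟩
  obtain ⟨⟨a, b⟩, hab, hmax⟩ := intervals.exists_max_image (fun p => p.2.val - p.1.val) ⟨_, hi₀⟩
  simp only [intervals, mem_filter, mem_univ, true_and, Prod.forall] at hab hmax
  obtain ⟨hle, hP⟩ := hab
  refine ⟨a, b, hle, hP, fun i hi hPi => ?_, fun i hi hPi => ?_⟩
  · have := hmax i b ⟨by omega, fun t h₁ h₂ => ?_⟩
    · omega
    · rcases eq_or_ne t i with rfl | hne
      · exact hPi
      · exact hP t (by omega) h₂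
  · have := hmax a i ⟨by omega, fun t h₁ h₂ => ?_⟩
    · omega
    · rcases eq_or_ne t i with rfl | hne
      · exact hPi
      · exact hP t h₁ (by omega)

theorem dotProduct_mulVec_indicator_nonneg {n : Type*} [Fintype n] [DecidableEq n]
    (K : Matrix n n ℝ) (hoff : ∀ i j, i ≠ j → K i j ≤ 0) (hrow : ∀ i, 0 ≤ ∑ j, K i j)
    (S : Finset n) (y : n → ℝ) (hin : ∀ i ∈ S, 0 ≤ y i)
    (hout : ∀ i ∉ S, ∀ j ∈ S, K i j ≠ 0 → y i ≤ 0) :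
    0 ≤ y ⬝ᵥ K *ᵥ fun j => if j ∈ S then 1 else 0 := by
  refine sum_nonneg fun i _ => ?_
  by_cases hi : i ∈ S
  · refine mul_nonneg (hin i hi) ((hrow i).trans (sum_le_sum fun j _ => ?_))
    by_cases hj : j ∈ S
    · simp [hj]
    · simpa [hj] using hoff i j (ne_of_mem_of_not_mem hi hj)
  · rw [mulVec, dotProduct, mul_sum]
    refine sum_nonneg fun j _ => ?_
    by_cases hj : j ∈ S
    · by_cases hK : K i j = 0
      · simp [hK]
      · simpa [hj] using mul_nonneg_of_nonpos_of_nonpos (hout i hi j hj hK)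
          (hoff i j (ne_of_mem_of_not_mem hj hi).symm)
    · simp [hj]

theorem exists_intervalVec_decrease_of_pos {g : ℕ} (K : Matrix (Fin g) (Fin g) ℝ)
    (hoff : ∀ i j, i ≠ j → K i j ≤ 0)
    (htri : ∀ i j : Fin g, i.val + 2 ≤ j.val ∨ j.val + 2 ≤ i.val → K i j = 0)
    (hrow : ∀ i, 0 ≤ ∑ j, K i j) (l : Fin g → ℤ) {i₀ : Fin g} (h : 0 < l i₀) :
    ∃ v, IsIntervalVec v ∧ ∑ i, ((l - v) i).natAbs < ∑ i, (l i).natAbs ∧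
      0 ≤ (Int.cast ∘ (l - v) : Fin g → ℝ) ⬝ᵥ K *ᵥ (Int.cast ∘ v) := by
  obtain ⟨a, b, hab, hpos, hleft, hright⟩ := exists_maximal_interval (0 < l ·) h
  set v : Fin g → ℤ := fun i => if a ≤ i ∧ i ≤ b then 1 else 0
  have hv_cast : (Int.cast ∘ v : Fin g → ℝ) = fun j => if j ∈ Icc a b then 1 else 0 := by
    ext; simp [v, apply_ite]
  refine ⟨v, ⟨a, b, hab, .inl fun _ => rfl⟩, ?_, ?_⟩
  · refine sum_lt_sum (fun i _ => ?_) ⟨a, mem_univ _, ?_⟩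
    · by_cases hi : a ≤ i ∧ i ≤ b
      · have := hpos i hi.1 hi.2
        simp only [Pi.sub_apply, v, if_pos hi]
        omega
      · simp [v, if_neg hi]
    · have := hpos a le_rfl hab
      simp only [Pi.sub_apply, v, if_pos (And.intro le_rfl hab)]
      omega
  · rw [hv_cast]
    refine dotProduct_mulVec_indicator_nonneg K hoff hrow _ _ (fun i hi => ?_) fun i hi j hj hK => ?_
    · rw [mem_Icc] at hi
      have := hpos i hi.1 hi.2
      simp only [Function.comp_apply, Pi.sub_apply, v, if_pos hi]
      exact_mod_cast (by omega : (0 : ℤ) ≤ l i - 1)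
    · rw [mem_Icc] at hi hj
      have hadj : i.val + 1 = a.val ∨ b.val + 1 = i.val := by
        by_contra hfar
        exact hK (htri i j (by omega))
      have hli : l i ≤ 0 := by
        rcases hadj with h | h
        exacts [not_lt.mp (hleft i h), not_lt.mp (hright i h)]
      simp only [Function.comp_apply, Pi.sub_apply, v, if_neg hi, sub_zero]
      exact_mod_cast hli

theorem exists_intervalVec_decrease {g : ℕ} (K : Matrix (Fin g) (Fin g) ℝ)
    (hoff : ∀ i j, i ≠ j → K i j ≤ 0)
    (htri : ∀ i j : Fin g, i.val + 2 ≤ j.val ∨ j.val + 2 ≤ i.val → K i j = 0)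
    (hrow : ∀ i, 0 ≤ ∑ j, K i j) {l : Fin g → ℤ} (hl : l ≠ 0) :
    ∃ v, IsIntervalVec v ∧ ∑ i, ((l - v) i).natAbs < ∑ i, (l i).natAbs ∧
      0 ≤ (Int.cast ∘ (l - v) : Fin g → ℝ) ⬝ᵥ K *ᵥ (Int.cast ∘ v) := by
  obtain ⟨i, hi : l i ≠ 0⟩ := Function.ne_iff.mp hl
  rcases hi.lt_or_gt with hneg | hpos
  · obtain ⟨w, hw, hlt, hcross⟩ :=
      exists_intervalVec_decrease_of_pos K hoff htri hrow (-l) (i₀ := i) (by simpa using hneg)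
    have hsub : l - -w = -(-l - w) := by abel
    refine ⟨-w, hw.neg, ?_, ?_⟩
    · simpa only [hsub, Pi.neg_apply, Int.natAbs_neg] using hlt
    · have hcast : ∀ u : Fin g → ℤ, (Int.cast ∘ (-u) : Fin g → ℝ) = -(Int.cast ∘ u) := by
        intro u; ext; simp
      rwa [hsub, hcast, hcast, neg_dotProduct, mulVec_neg, dotProduct_neg, neg_neg]
  · exact exists_intervalVec_decrease_of_pos K hoff htri hrow l hpos

/-- For `c = Z + K m` this is the increment `θ(m + x) - θ(m)` of the exponent
`θ(n) = n K nᵀ / 2 + n Zᵀ` of the tropical theta function. -/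
noncomputable def quadIncrement {n : Type*} [Fintype n] (K : Matrix n n ℝ) (c x : n → ℝ) : ℝ :=
  x ⬝ᵥ c + x ⬝ᵥ K *ᵥ x / 2

theorem quadIncrement_add {n : Type*} [Fintype n] {K : Matrix n n ℝ} (hsym : K.IsSymm)
    (c x y : n → ℝ) :
    quadIncrement K c (x + y) = quadIncrement K c x + quadIncrement K c y + x ⬝ᵥ K *ᵥ y := by
  have hswap : y ⬝ᵥ K *ᵥ x = x ⬝ᵥ K *ᵥ y := by
    rw [dotProduct_mulVec, dotProduct_comm, ← mulVec_transpose, hsym.eq]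
  simp only [quadIncrement, add_dotProduct, mulVec_add, dotProduct_add, hswap]
  ring

theorem quadIncrement_nonneg_of_intervalVec {g : ℕ} (K : Matrix (Fin g) (Fin g) ℝ)
    (hsym : K.IsSymm) (hoff : ∀ i j, i ≠ j → K i j ≤ 0)
    (htri : ∀ i j : Fin g, i.val + 2 ≤ j.val ∨ j.val + 2 ≤ i.val → K i j = 0)
    (hrow : ∀ i, 0 ≤ ∑ j, K i j) (c : Fin g → ℝ)
    (hc : ∀ v, IsIntervalVec v → 0 ≤ quadIncrement K c (Int.cast ∘ v)) (l : Fin g → ℤ) :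
    0 ≤ quadIncrement K c (Int.cast ∘ l) := by
  induction hn : ∑ i, (l i).natAbs using Nat.strong_induction_on generalizing l with
  | _ n ih =>
  by_cases hl : l = 0
  · simp [hl, quadIncrement]
  obtain ⟨v, hv, hlt, hcross⟩ := exists_intervalVec_decrease K hoff htri hrow hl
  have hsplit : (Int.cast ∘ l : Fin g → ℝ) = Int.cast ∘ (l - v) + Int.cast ∘ v := by
    ext; simp
  rw [hsplit, quadIncrement_add hsym]
  exact add_nonneg (add_nonneg (ih _ (hn ▸ hlt) _ rfl) (hc v hv)) hcross

theorem quadIncrement_add_mulVec {n : Type*} [Fintype n] (K : Matrix n n ℝ) (Z m x : n → ℝ) :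
    quadIncrement K (Z + K *ᵥ m) x =
      ∑ i, x i * Z i + ∑ i, ∑ j, x i * K i j * (m j + x j / 2) := by
  simp only [quadIncrement, dotProduct, mulVec, Pi.add_apply, mul_add, sum_add_distrib, mul_sum,
    sum_div, mul_assoc, mul_div_assoc, add_assoc]

theorem fundamental_region_finite_description_general {g : ℕ}
    (K : Matrix (Fin g) (Fin g) ℝ) (hsym : K.IsSymm)
    (hoff : ∀ i j : Fin g, i ≠ j → K i j ≤ 0)
    (htri : ∀ i j : Fin g, i.val + 2 ≤ j.val ∨ j.val + 2 ≤ i.val → K i j = 0)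
    (hrow : ∀ i : Fin g, 0 < ∑ j, K i j)
    (m : Fin g → ℤ) :
    {Z : Fin g → ℝ | ∀ l : Fin g → ℤ,
        -(∑ i, (l i : ℝ) * Z i) ≤
          ∑ i, ∑ j, (l i : ℝ) * K i j * ((m j : ℝ) + (l j : ℝ) / 2)} =
    {Z : Fin g → ℝ | ∀ l : Fin g → ℤ, IsIntervalVec l →
        -(∑ i, (l i : ℝ) * Z i) ≤
          ∑ i, ∑ j, (l i : ℝ) * K i j * ((m j : ℝ) + (l j : ℝ) / 2)} := by
  ext Z
  have hZ : ∀ l : Fin g → ℤ, -(∑ i, (l i : ℝ) * Z i) ≤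
      ∑ i, ∑ j, (l i : ℝ) * K i j * ((m j : ℝ) + (l j : ℝ) / 2) ↔
      0 ≤ quadIncrement K (Z + K *ᵥ (Int.cast ∘ m)) (Int.cast ∘ l) := fun l => by
    rw [quadIncrement_add_mulVec, neg_le_iff_add_nonneg']
    rfl
  simp only [Set.mem_ofPred_eq, hZ]
  exact ⟨fun h l _ => h l, quadIncrement_nonneg_of_intervalVec K hsym hoff htri
    (fun i => (hrow i).le) _⟩

theorem fundamental_region_finite_description {g : ℕ}
    (K : Matrix (Fin g) (Fin g) ℝ) (hsym : K.IsSymm) (hpd : K.PosDef)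
    (hoff : ∀ i j : Fin g, i ≠ j → K i j ≤ 0)
    (htri : ∀ i j : Fin g, i.val + 2 ≤ j.val ∨ j.val + 2 ≤ i.val → K i j = 0)
    (hrow : ∀ i : Fin g, 0 < ∑ j, K i j)
    (m : Fin g → ℤ) :
    {Z : Fin g → ℝ | ∀ l : Fin g → ℤ,
        -(∑ i, (l i : ℝ) * Z i) ≤
          ∑ i, ∑ j, (l i : ℝ) * K i j * ((m j : ℝ) + (l j : ℝ) / 2)} =
    {Z : Fin g → ℝ | ∀ l : Fin g → ℤ, IsIntervalVec l →
        -(∑ i, (l i : ℝ) * Z i) ≤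
          ∑ i, ∑ j, (l i : ℝ) * K i j * ((m j : ℝ) + (l j : ℝ) / 2)} :=
  fundamental_region_finite_description_general K hsym hoff htri hrow m
end

section
/- Let T: ℤ × ℤ → ℝ satisfy the tropical bilinear equation T(n,t) + T(n,t+2) = min[2T(n,t+1), T(n-1,t+2) + T(n+1,t) + L] for all n, t, together with the quasi-periodicity T(n+g+1,t) = T(n,t) + an + bt + c and 2b - a < (g+1)L. Then for every t there exists n ∈ ℤ with T(n,t) + T(n,t+2) = 2T(n,t+1). -/
/-!
If equality failed for every `n` at some time `t`, the minimum would always be attained by the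
second branch, so `n ↦ T (n - 1) (t + 2) - T n t - n L` would be invariant under `n ↦ n + 1`.
Comparing its values at `0` and `g + 1` through the quasi-periodicity gives `2b - a = (g + 1) L`.
-/

theorem eq_right_of_eq_min_of_ne {x u v : ℝ} (hmin : x = min u v) (hne : x ≠ u) : x = v := by
  rcases min_choice u v with h | h
  · exact absurd (hmin.trans h) hne
  · exact hmin.trans h

theorem Function.Periodic.int_add_natCast {φ : ℤ → ℝ} (hφ : Function.Periodic φ 1) (n : ℤ)
    (k : ℕ) : φ (n + k) = φ n := by
  simpa using hφ.nat_mul k n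

theorem bilinear_has_equality_point_general (g : ℕ) (L a b c : ℝ)
    (T : ℤ → ℤ → ℝ)
    (hbil : ∀ n t : ℤ, T n t + T n (t + 2) =
      min (2 * T n (t + 1)) (T (n - 1) (t + 2) + T (n + 1) t + L))
    (hquasi : ∀ n t : ℤ, T (n + g + 1) t = T n t + (a * n + b * t + c))
    (hL : 2 * b - a < (g + 1) * L) :
    ∀ t : ℤ, ∃ n : ℤ, T n t + T n (t + 2) = 2 * T n (t + 1) := by
  intro t
  by_contra! hne
  set φ : ℤ → ℝ := fun n => T (n - 1) (t + 2) - T n t - n * L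
  have hφ : Function.Periodic φ 1 := fun n => by
    have h := eq_right_of_eq_min_of_ne (hbil n t) (hne n)
    simp only [φ, add_sub_cancel_right, Int.cast_add, Int.cast_one]
    linarith
  have hcycle := hφ.int_add_natCast 0 (g + 1)
  have hq₀ := hquasi 0 t
  have hq₁ := hquasi (-1) (t + 2)
  simp only [φ, zero_add, zero_sub, Nat.cast_add, Nat.cast_one, Int.cast_add, Int.cast_natCast,
    Int.cast_one, Int.cast_zero, add_sub_cancel_right] at hcycle hq₀ hq₁
  push_cast at hq₁
  rw [show (-1 : ℤ) + g + 1 = g by ring] at hq₁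
  linarith

theorem bilinear_has_equality_point (g : ℕ) (hg : 0 < g) (L a b c : ℝ)
    (T : ℤ → ℤ → ℝ)
    (hbil : ∀ n t : ℤ, T n t + T n (t + 2) =
      min (2 * T n (t + 1)) (T (n - 1) (t + 2) + T (n + 1) t + L))
    (hquasi : ∀ n t : ℤ, T (n + g + 1) t = T n t + (a * n + b * t + c))
    (hL : 2 * b - a < (g + 1) * L) :
    ∀ t : ℤ, ∃ n : ℤ, T n t + T n (t + 2) = 2 * T n (t + 1) :=
  bilinear_has_equality_point_general g L a b c T hbil hquasi hL
end
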